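/- For all integers A ≥ 1, B ≥ 2, d ≥ 2 and every integer n ≥ 1 with n ≤ A·B^d, the d-subdivision K_{n,d} of the complete graph K_n satisfies π(K_{n,d}) ≤ A + 8B. -/

import Mathlib

open SimpleGraph MeasureTheory Filter

/-! ### Subdivisions -/

/-- A witness that the graph `H` is a subdivision of the graph `G`:  `H` is obtained from `G`
by replacing each edge `ab` of `G` by a path between (the copies of) `a` and `b` whose internal
(division) vertices are new and pairwise distinct. -/
structure SubdivisionWitness {V : Type*} {W : Type*} (G : SimpleGraph V) (H : SimpleGraph W) where
  emb : V ↪ W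
  path : ∀ ⦃a b : V⦄, G.Adj a b → H.Walk (emb a) (emb b)
  path_isPath : ∀ ⦃a b : V⦄ (h : G.Adj a b), (path h).IsPath
  path_symm : ∀ ⦃a b : V⦄ (h : G.Adj a b), path h.symm = (path h).reverse
  internal_new : ∀ ⦃a b : V⦄ (h : G.Adj a b) (x : V),
    emb x ∈ (path h).support → x = a ∨ x = b
  internally_disjoint : ∀ ⦃a b a' b' : V⦄ (h : G.Adj a b) (h' : G.Adj a' b'),
    s(a, b) ≠ s(a', b') → ∀ w : W, w ∈ (path h).support → w ∈ (path h').support →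
      ∃ x : V, emb x = w
  vert_cover : ∀ w : W,
    (∃ x : V, emb x = w) ∨ ∃ (a b : V) (h : G.Adj a b), w ∈ (path h).support
  edge_cover : ∀ e ∈ H.edgeSet, ∃ (a b : V) (h : G.Adj a b), e ∈ (path h).edges

/-- `H` is a subdivision of `G`. -/
def IsSubdivision {V W : Type*} (G : SimpleGraph V) (H : SimpleGraph W) : Prop :=
  Nonempty (SubdivisionWitness G H)

/-- `H` is a `(≤ t)`-subdivision of `G`: a subdivision with at most `t` division vertices
per edge (i.e. each replacing path has length at most `t + 1`). -/
def IsLESubdivision {V W : Type*} (t : ℕ) (G : SimpleGraph V) (H : SimpleGraph W) : Prop :=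
  ∃ S : SubdivisionWitness G H, ∀ ⦃a b : V⦄ (h : G.Adj a b), (S.path h).length ≤ t + 1

/-- `H` is the `t`-subdivision of `G`: exactly `t` division vertices on each edge. -/
def IsExactSubdivision {V W : Type*} (t : ℕ) (G : SimpleGraph V) (H : SimpleGraph W) : Prop :=
  ∃ S : SubdivisionWitness G H, ∀ ⦃a b : V⦄ (h : G.Adj a b), (S.path h).length = t + 1

/-! ### Shallow topological minors and the top-grad -/

/-- `H` is a shallow topological minor of `G` at depth `d`:  some `(≤ 2d)`-subdivision of `H`
is isomorphic to a subgraph of `G`. -/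
def IsShallowTopMinor {W V : Type*} (d : ℕ) (H : SimpleGraph W) (G : SimpleGraph V) : Prop :=
  ∃ (m : ℕ) (S : SimpleGraph (Fin m)),
    IsLESubdivision (2 * d) H S ∧ ∃ f : S →g G, Function.Injective f

/-- The topological greatest reduced average density (top-grad) `∇̃_d(G)` of rank `d`:
the maximum of `‖H‖/|H|` over all shallow topological minors `H` of `G` at depth `d`
with at least one vertex. -/
noncomputable def topGrad {V : Type*} (d : ℕ) (G : SimpleGraph V) : ℝ :=
  sSup {q : ℝ | ∃ (m : ℕ) (H : SimpleGraph (Fin m)), 0 < m ∧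
    IsShallowTopMinor d H G ∧ q = (Nat.card H.edgeSet : ℝ) / m}

/-! ### Shallow minors, the grad, and bounded expansion -/

/-- `H` is a shallow minor of `G` at depth `d`: it is obtained from `G` by contracting
pairwise disjoint connected subgraphs (branch sets) of radius at most `d` and taking
a simple subgraph of the result. -/
def IsShallowMinor {W V : Type*} (d : ℕ) (H : SimpleGraph W) (G : SimpleGraph V) : Prop :=
  ∃ B : W → Set V,
    (∀ i, (B i).Nonempty) ∧
    (∀ i j, i ≠ j → Disjoint (B i) (B j)) ∧
    (∀ i : W, ∃ c : (B i), ∀ v : (B i), ∃ p : (G.induce (B i)).Walk c v, p.length ≤ d) ∧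
    (∀ i j : W, H.Adj i j → ∃ u ∈ B i, ∃ v ∈ B j, G.Adj u v)

/-- The greatest reduced average density (grad) `∇_d(G)` of rank `d`. -/
noncomputable def grad {V : Type*} (d : ℕ) (G : SimpleGraph V) : ℝ :=
  sSup {q : ℝ | ∃ (m : ℕ) (H : SimpleGraph (Fin m)), 0 < m ∧
    IsShallowMinor d H G ∧ q = (Nat.card H.edgeSet : ℝ) / m}

/-- A class of finite simple graphs, represented by graphs on `Fin n` for all `n`. -/
abbrev GraphClass := Set ((n : ℕ) × SimpleGraph (Fin n))

/-- A class of graphs has bounded expansion if `∇_d` is bounded on the class by a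
function of `d`. -/
def BoundedExpansion (C : GraphClass) : Prop :=
  ∃ f : ℕ → ℝ, ∀ G ∈ C, ∀ d : ℕ, grad d G.2 ≤ f d

/-! ### Graph parameters -/

/-- A graph parameter is isomorphism-invariant. -/
def IsoInvariant (α : ((n : ℕ) × SimpleGraph (Fin n)) → ℝ) : Prop :=
  ∀ G H : (n : ℕ) × SimpleGraph (Fin n), Nonempty (G.2 ≃g H.2) → α G = α H

/-- A graph parameter is strongly topological: `α(G)` and `α(H)` bound each other through a
fixed non-decreasing function, whenever `H` is a `(≤1)`-subdivision of `G`. -/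
def StronglyTopological (α : ((n : ℕ) × SimpleGraph (Fin n)) → ℝ) : Prop :=
  ∃ f : ℝ → ℝ, Monotone f ∧ ∀ G H : (n : ℕ) × SimpleGraph (Fin n),
    IsLESubdivision 1 G.2 H.2 → α G ≤ f (α H) ∧ α H ≤ f (α G)

/-- A graph parameter is monotone: it does not increase when passing to a subgraph. -/
def MonotoneParam (α : ((n : ℕ) × SimpleGraph (Fin n)) → ℝ) : Prop :=
  ∀ G H : (n : ℕ) × SimpleGraph (Fin n),
    (∃ f : H.2 →g G.2, Function.Injective f) → α H ≤ α G

/-- A graph parameter is degree-bound: every nonempty graph has a vertex of degree at most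
`f(α(G))` for some fixed function `f`. -/
def DegreeBound (α : ((n : ℕ) × SimpleGraph (Fin n)) → ℝ) : Prop :=
  ∃ f : ℝ → ℝ, ∀ G : (n : ℕ) × SimpleGraph (Fin n), 0 < G.1 →
    ∃ v : Fin G.1, (Nat.card (G.2.neighborSet v) : ℝ) ≤ f (α G)

/-! ### Queue and stack layouts -/

/-- A `k`-queue layout of `G` with respect to the linear order on `V`: an assignment of the
(potential) edges to `k` queues so that no two edges in a common queue are nested. -/
def IsQueueLayout {V : Type*} [LinearOrder V] (G : SimpleGraph V) (k : ℕ)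
    (q : Sym2 V → Fin k) : Prop :=
  ∀ ⦃a b c d : V⦄, G.Adj a b → G.Adj c d → a < b → c < d →
    q s(a, b) = q s(c, d) → ¬(a < c ∧ d < b)

/-- The signed queue function `Q`:  `Q(v,w) = q(vw)` if `v < w` and `Q(v,w) = -q(vw)`
if `w < v` (queues are numbered `1,…,k`). -/
def signedQueue {V : Type*} [LinearOrder V] {k : ℕ} (q : Sym2 V → Fin k) (v w : V) : ℤ :=
  if v < w then ((q s(v, w) : ℕ) : ℤ) + 1 else -(((q s(v, w) : ℕ) : ℤ) + 1)

/-- `G` admits a `k`-queue layout (for some vertex ordering). -/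
def HasQueueLayout {V : Type*} (G : SimpleGraph V) (k : ℕ) : Prop :=
  ∃ (ord : LinearOrder V) (q : Sym2 V → Fin k), @IsQueueLayout V ord G k q

/-- A `k`-stack layout of `G` with respect to the linear order on `V`: an assignment of the
(potential) edges to `k` stacks so that no two edges in a common stack cross. -/
def IsStackLayout {V : Type*} [LinearOrder V] (G : SimpleGraph V) (k : ℕ)
    (q : Sym2 V → Fin k) : Prop :=
  ∀ ⦃a b c d : V⦄, G.Adj a b → G.Adj c d → a < b → c < d →
    q s(a, b) = q s(c, d) → ¬(a < c ∧ c < b ∧ b < d)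

/-- `G` admits a `k`-stack layout (for some vertex ordering). -/
def HasStackLayout {V : Type*} (G : SimpleGraph V) (k : ℕ) : Prop :=
  ∃ (ord : LinearOrder V) (q : Sym2 V → Fin k), @IsStackLayout V ord G k q

/-! ### Contracting the components of a subgraph -/

/-- The equivalence relation on `V(G)` identifying the vertices in a common connected
component of the subgraph `F`. -/
def contractSetoid {V : Type*} {G : SimpleGraph V} (F : G.Subgraph) : Setoid V where
  r u v := u = v ∨ ∃ (hu : u ∈ F.verts) (hv : v ∈ F.verts),
    F.coe.Reachable ⟨u, hu⟩ ⟨v, hv⟩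
  iseqv := by
    refine ⟨fun x => Or.inl rfl, ?_, ?_⟩
    · rintro x y (rfl | ⟨hx, hy, h⟩)
      · exact Or.inl rfl
      · exact Or.inr ⟨hy, hx, h.symm⟩
    · rintro x y z (rfl | ⟨hx, hy, h⟩) hyz
      · exact hyz
      · rcases hyz with (rfl | ⟨hy', hz, h'⟩)
        · exact Or.inr ⟨hx, hy, h⟩
        · exact Or.inr ⟨hx, hz, h.trans h'⟩

/-- The simple graph obtained from `G` by contracting each connected component of the
subgraph `F` to a single vertex (deleting loops and parallel edges). -/
def contractGraph {V : Type*} {G : SimpleGraph V} (F : G.Subgraph) :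
    SimpleGraph (Quotient (contractSetoid F)) where
  Adj A B := A ≠ B ∧ ∃ u v : V, G.Adj u v ∧
    Quotient.mk (contractSetoid F) u = A ∧ Quotient.mk (contractSetoid F) v = B
  symm := by
    constructor
    rintro A B ⟨hne, u, v, h, hu, hv⟩
    exact ⟨hne.symm, v, u, h.symm, hv, hu⟩
  loopless := by
    constructor
    rintro A ⟨hne, -⟩
    exact hne rfl

/-! ### Non-repetitive and acyclic colourings -/

/-- A colouring `f` of `G` is non-repetitive if there is no path `v₀, …, v_{2s-1}` in `G`
(`s ≥ 1`, vertices pairwise distinct, consecutive vertices adjacent) with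
`f(v_i) = f(v_{i+s})` for all `i < s`. -/
def NonRepColoring {V α : Type*} (G : SimpleGraph V) (f : V → α) : Prop :=
  ∀ s : ℕ, 0 < s → ∀ v : ℕ → V,
    (∀ i, i < 2 * s → ∀ j, j < 2 * s → i ≠ j → v i ≠ v j) →
    (∀ i, i + 1 < 2 * s → G.Adj (v i) (v (i + 1))) →
    ¬(∀ i, i < s → f (v i) = f (v (i + s)))

/-- `π(G)`: the minimum number of colours in a non-repetitive colouring of `G`. -/
noncomputable def piNum {V : Type*} (G : SimpleGraph V) : ℕ :=
  sInf {k : ℕ | ∃ f : V → Fin k, NonRepColoring G f}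

/-- A proper colouring of `G` with no bichromatic cycle (every cycle receives at least
three colours). -/
def AcyclicColoring {V α : Type*} (G : SimpleGraph V) (f : V → α) : Prop :=
  (∀ u w : V, G.Adj u w → f u ≠ f w) ∧
  ∀ (u : V) (c : G.Walk u u), c.IsCycle →
    ∃ x ∈ c.support, ∃ y ∈ c.support, ∃ z ∈ c.support, f x ≠ f y ∧ f x ≠ f z ∧ f y ≠ f z

/-- `χₐ(G)`: the acyclic chromatic number of `G`. -/
noncomputable def chiA {V : Type*} (G : SimpleGraph V) : ℕ :=
  sInf {k : ℕ | ∃ f : V → Fin k, AcyclicColoring G f}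

/-! ### The Erdős–Rényi random graph `G(n, p)` -/

/-- The Erdős–Rényi measure: each potential edge (coordinate) is present independently with
probability `p` (truncated to `[0,1]`). -/
noncomputable def erdosRenyi (n : ℕ) (p : ℝ) : Measure (Sym2 (Fin n) → Bool) :=
  Measure.pi fun _ =>
    ((PMF.bernoulli (min (Real.toNNReal p) 1) (min_le_right _ _)).toMeasure)

/-- The simple graph on `Fin n` determined by an outcome `ω` of the edge indicators. -/
def graphOf {n : ℕ} (ω : Sym2 (Fin n) → Bool) : SimpleGraph (Fin n) where
  Adj u v := u ≠ v ∧ ω s(u, v) = true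
  symm := by
    constructor
    rintro u v ⟨hne, h⟩
    exact ⟨hne.symm, by rwa [Sym2.eq_swap]⟩
  loopless := by
    constructor
    rintro u ⟨hne, -⟩
    exact hne rfl


/-!
Fix an injective code `x ↦ (α x, β₁ x, …, β_d x) ∈ [A] × [B]^d` of the branch vertices. A branch
vertex `x` gets colour `α x`; the `k`-th division vertex on the path replacing `xy`, `x < y`,
counted from `x`, gets the digit `β_k y` together with one of seven phase letters: position `1`
carries letters of its own, which reveal the direction of traversal, the last position where the
digits of `x` and `y` differ carries a mark, and all other positions follow a square-free word
derived from the Thue–Morse word.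

On a repetitive path the two halves have their branch vertices at the same places. With none, the
path runs inside one replacing path and its phases would form a square. With two or more per
half, each half contains a full traversal of an edge, the two with equal colours: the phase at
position `1` forces the same direction and then the digits force a common endpoint. With exactly
one per half, the middle traverses an edge `x x'` with `α x = α x'`; its marked position lies in
the part of the path that repeats the edge leaving `x'` or the edge entering `x`, and there the
direction, the digits or the mark give a contradiction.
-/

def thueMorse (n : ℕ) : Bool :=
  if h : n = 0 then false else xor (thueMorse (n / 2)) (n % 2 = 1)
decreasing_by omega

theorem thueMorse_two_mul (k : ℕ) : thueMorse (2 * k) = thueMorse k := by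
  rcases Nat.eq_zero_or_pos k with rfl | hk
  · rfl
  · rw [thueMorse, dif_neg (by omega)]
    simp [Nat.mul_div_cancel_left k two_pos]

theorem thueMorse_two_mul_add_one (k : ℕ) : thueMorse (2 * k + 1) = !thueMorse k := by
  rw [thueMorse, dif_neg (by omega)]
  simp [show (2 * k + 1) / 2 = k by omega]

theorem thueMorse_ne_succ_of_even {n : ℕ} (hn : Even n) : thueMorse n ≠ thueMorse (n + 1) := by
  obtain ⟨k, rfl⟩ := hn
  rw [← two_mul, thueMorse_two_mul_add_one, thueMorse_two_mul]
  exact (Bool.not_ne_self _).symm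

theorem thueMorse_overlap_free {s : ℕ} (hs : 0 < s) (p : ℕ) :
    ¬ ∀ i ≤ s, thueMorse (p + i) = thueMorse (p + s + i) := by
  induction s using Nat.strong_induction_on generalizing p with
  | _ s ih =>
  intro h
  rcases Nat.even_or_odd s with ⟨r, rfl⟩ | hodd
  · -- an overlap of even period `2r` halves to an overlap of period `r` at `p / 2`
    rcases Nat.even_or_odd' p with ⟨m, rfl | rfl⟩
    · refine ih r (by omega) (by omega) m fun j hj => ?_
      have := h (2 * j) (by omega)
      rwa [show 2 * m + 2 * j = 2 * (m + j) by ring, show 2 * m + (r + r) + 2 * j =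
        2 * (m + r + j) by ring, thueMorse_two_mul, thueMorse_two_mul] at this
    · refine ih r (by omega) (by omega) m fun j hj => ?_
      have := h (2 * j) (by omega)
      rwa [show 2 * m + 1 + 2 * j = 2 * (m + j) + 1 by ring, show 2 * m + 1 + (r + r) + 2 * j =
        2 * (m + r + j) + 1 by ring, thueMorse_two_mul_add_one, thueMorse_two_mul_add_one,
        Bool.not_inj_iff] at this
  · -- for odd `s`, every position of `[p, p + s]` differs from the next one, either directly or
    -- after a shift by `s` that makes it even; so the word alternates there, yet `s` is odd
    have halt : ∀ i < s, thueMorse (p + i) ≠ thueMorse (p + i + 1) := by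
      intro i hi
      rcases Nat.even_or_odd (p + i) with he | ho
      · exact thueMorse_ne_succ_of_even he
      · rw [h i hi.le, show p + i + 1 = p + (i + 1) by ring, h (i + 1) hi]
        convert thueMorse_ne_succ_of_even (ho.add_odd hodd) using 2 <;> ring_nf
    have hflip : ∀ i ≤ s, thueMorse (p + i) = xor (thueMorse p) (decide (Odd i)) := by
      intro i hi
      induction i with
      | zero => simp
      | succ i ihi =>
        have := halt i (by omega)
        rw [ihi (by omega)] at this
        rw [← add_assoc, Bool.eq_not_of_ne this.symm]
        simp [Nat.odd_add_one, ← Nat.not_even_iff_odd]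
    have := hflip s le_rfl
    have h0 := h 0 hs.le
    rw [add_zero, add_zero] at h0
    rw [← h0] at this
    simp [hodd] at this

def squareFreeWord (k : ℕ) : Bool × Bool := (thueMorse k, thueMorse (k + 1))

theorem squareFreeWord_square_free {s : ℕ} (hs : 0 < s) (p : ℕ) :
    ¬ ∀ t < s, squareFreeWord (p + t) = squareFreeWord (p + s + t) := by
  intro h
  refine thueMorse_overlap_free hs p fun i hi => ?_
  rcases hi.lt_or_eq with hi | rfl
  · exact congrArg Prod.fst (h i hi)
  · have := congrArg Prod.snd (h (i - 1) (by omega))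
    simp only [squareFreeWord] at this
    rwa [show p + (i - 1) + 1 = p + i by omega, show p + i + (i - 1) + 1 = p + i + i by omega]
      at this

theorem NonRepColoring.comp_injective {V α β : Type*} {G : SimpleGraph V} {f : V → α}
    (hf : NonRepColoring G f) {e : α → β} (he : Function.Injective e) :
    NonRepColoring G (e ∘ f) :=
  fun s hs v hdist hadj hrep => hf s hs v hdist hadj fun i hi => he (hrep i hi)

theorem piNum_le_card {V α : Type*} [Fintype α] {G : SimpleGraph V} {f : V → α}
    (hf : NonRepColoring G f) : piNum G ≤ Fintype.card α :=
  Nat.sInf_le ⟨_, hf.comp_injective (Fintype.equivFin α).injective⟩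

namespace SubdivisionWitness

variable {V W : Type*} {G : SimpleGraph V} {H : SimpleGraph W} (S : SubdivisionWitness G H)

open scoped Classical in
noncomputable def pathVert (a b : V) (k : ℕ) : W :=
  if h : G.Adj a b then (S.path h).getVert k else S.emb a

theorem pathVert_of_adj {a b : V} (h : G.Adj a b) (k : ℕ) :
    S.pathVert a b k = (S.path h).getVert k :=
  dif_pos h

theorem pathVert_zero {a b : V} (h : G.Adj a b) : S.pathVert a b 0 = S.emb a := by
  simp [S.pathVert_of_adj h]

variable {S} {d : ℕ} (hS : ∀ ⦃a b : V⦄ (h : G.Adj a b), (S.path h).length = d + 1)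
include hS

theorem pathVert_last {a b : V} (h : G.Adj a b) : S.pathVert a b (d + 1) = S.emb b := by
  simp [S.pathVert_of_adj h, ← hS h]

theorem pathVert_swap {a b : V} (h : G.Adj a b) (k : ℕ) :
    S.pathVert b a k = S.pathVert a b (d + 1 - k) := by
  rw [S.pathVert_of_adj h, S.pathVert_of_adj h.symm, S.path_symm h, Walk.getVert_reverse, hS h]

theorem pathVert_inj {a b : V} (h : G.Adj a b) {k k' : ℕ} (hk : k ≤ d + 1) (hk' : k' ≤ d + 1) :
    S.pathVert a b k = S.pathVert a b k' ↔ k = k' := by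
  rw [S.pathVert_of_adj h, S.pathVert_of_adj h]
  exact ⟨fun e => (S.path_isPath h).getVert_injOn (by simp [hS h, hk]) (by simp [hS h, hk']) e,
    congrArg _⟩

theorem pathVert_eq_emb_iff {a b : V} (h : G.Adj a b) {k : ℕ} (hk : k ≤ d + 1) (x : V) :
    S.pathVert a b k = S.emb x ↔ k = 0 ∧ x = a ∨ k = d + 1 ∧ x = b := by
  constructor
  · intro e
    have hmem : S.emb x ∈ (S.path h).support := by
      rw [← e, S.pathVert_of_adj h]; exact Walk.getVert_mem_support _ _
    rcases S.internal_new h x hmem with rfl | rfl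
    · exact .inl ⟨(pathVert_inj hS h hk (Nat.zero_le _)).1 (e.trans (S.pathVert_zero h).symm), rfl⟩
    · exact .inr ⟨(pathVert_inj hS h hk le_rfl).1 (e.trans (pathVert_last hS h).symm), rfl⟩
  · rintro (⟨rfl, rfl⟩ | ⟨rfl, rfl⟩)
    exacts [S.pathVert_zero h, pathVert_last hS h]

theorem pathVert_ne_emb {a b : V} (h : G.Adj a b) {k : ℕ} (hk1 : 1 ≤ k) (hk : k ≤ d) (x : V) :
    S.pathVert a b k ≠ S.emb x := by
  rw [Ne, pathVert_eq_emb_iff hS h (by omega)]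
  omega

theorem pathVert_eq_pathVert {a b a' b' : V} (h : G.Adj a b) (h' : G.Adj a' b') {k k' : ℕ}
    (hk1 : 1 ≤ k) (hk : k ≤ d) (hk1' : 1 ≤ k') (hk' : k' ≤ d)
    (e : S.pathVert a b k = S.pathVert a' b' k') :
    a = a' ∧ b = b' ∧ k = k' ∨ a = b' ∧ b = a' ∧ k + k' = d + 1 := by
  by_cases hab : s(a, b) = s(a', b')
  · rcases Sym2.eq_iff.1 hab with ⟨rfl, rfl⟩ | ⟨rfl, rfl⟩
    · exact .inl ⟨rfl, rfl, (pathVert_inj hS h (by omega) (by omega)).1 e⟩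
    · rw [pathVert_swap hS h, pathVert_inj hS h (by omega) (by omega)] at e
      exact .inr ⟨rfl, rfl, by omega⟩
  · obtain ⟨x, hx⟩ := S.internally_disjoint h h' hab (S.pathVert a b k)
      (by rw [S.pathVert_of_adj h]; exact Walk.getVert_mem_support _ _)
      (by rw [e, S.pathVert_of_adj h']; exact Walk.getVert_mem_support _ _)
    exact absurd hx.symm (pathVert_ne_emb hS h hk1 hk x)

theorem exists_pathVert_of_adj {w w' : W} (hw : H.Adj w w') :
    ∃ a b k, G.Adj a b ∧ k ≤ d ∧ w = S.pathVert a b k ∧ w' = S.pathVert a b (k + 1) := by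
  obtain ⟨a, b, h, he⟩ := S.edge_cover _ (H.mem_edgeSet.2 hw)
  obtain ⟨k, hk, e⟩ := (Walk.mk_mem_edges_iff_exists _).1 he
  rw [hS h] at hk
  rw [← S.pathVert_of_adj h, ← S.pathVert_of_adj h] at e
  rcases Sym2.eq_iff.1 e with ⟨h1, h2⟩ | ⟨h1, h2⟩
  · exact ⟨a, b, k, h, by omega, h1.symm, h2.symm⟩
  · refine ⟨b, a, d - k, h.symm, by omega, ?_, ?_⟩
    · rw [pathVert_swap hS h, ← h2]; congr 1; omega
    · rw [pathVert_swap hS h, ← h1]; congr 1; omega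

theorem mem_range_emb_or_exists_pathVert (w : W) :
    w ∈ Set.range S.emb ∨ ∃ a b k, G.Adj a b ∧ 1 ≤ k ∧ k ≤ d ∧ w = S.pathVert a b k := by
  rcases S.vert_cover w with hw | ⟨a, b, h, hw⟩
  · exact .inl hw
  obtain ⟨k, rfl, hk⟩ := Walk.mem_support_iff_exists_getVert.1 hw
  rw [hS h] at hk
  rw [← S.pathVert_of_adj h]
  by_cases hk' : 1 ≤ k ∧ k ≤ d
  · exact .inr ⟨a, b, k, h, hk'.1, hk'.2, rfl⟩
  · obtain rfl | rfl : k = 0 ∨ k = d + 1 := by omega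
    exacts [.inl ⟨a, (S.pathVert_zero h).symm⟩, .inl ⟨b, (pathVert_last hS h).symm⟩]

theorem adj_pathVert {a b : V} (h : G.Adj a b) {k : ℕ} (hk1 : 1 ≤ k) (hk : k ≤ d) {w : W}
    (hw : H.Adj (S.pathVert a b k) w) :
    w = S.pathVert a b (k - 1) ∨ w = S.pathVert a b (k + 1) := by
  obtain ⟨a', b', k', h', hk', e, rfl⟩ := exists_pathVert_of_adj hS hw
  have hk1' : 1 ≤ k' := by
    by_contra! h0
    rw [show k' = 0 by omega, S.pathVert_zero h'] at e
    exact pathVert_ne_emb hS h hk1 hk _ e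
  rcases pathVert_eq_pathVert hS h h' hk1 hk hk1' hk' e with ⟨rfl, rfl, rfl⟩ | ⟨rfl, rfl, hkk⟩
  · exact .inr rfl
  · left
    rw [pathVert_swap hS h]
    congr 1
    omega

theorem adj_emb_pathVert {a b x : V} (h : G.Adj a b) {k : ℕ} (hk1 : 1 ≤ k) (hk : k ≤ d)
    (hx : H.Adj (S.emb x) (S.pathVert a b k)) : k = 1 ∧ x = a ∨ k = d ∧ x = b := by
  rcases adj_pathVert hS h hk1 hk hx.symm with e | e
  · rcases (pathVert_eq_emb_iff hS h (by omega) x).1 e.symm with ⟨hk0, rfl⟩ | ⟨hk0, -⟩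
    · exact .inl ⟨by omega, rfl⟩
    · omega
  · rcases (pathVert_eq_emb_iff hS h (by omega) x).1 e.symm with ⟨hk0, -⟩ | ⟨hk0, rfl⟩
    · omega
    · exact .inr ⟨by omega, rfl⟩

theorem not_adj_emb_emb (hd : 1 ≤ d) (x y : V) : ¬ H.Adj (S.emb x) (S.emb y) := by
  intro hxy
  obtain ⟨a, b, k, h, hk, ex, ey⟩ := exists_pathVert_of_adj hS hxy
  have := (pathVert_eq_emb_iff hS h (by omega) x).1 ex.symm
  have := (pathVert_eq_emb_iff hS h (by omega) y).1 ey.symm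
  omega

variable {v : ℕ → W} {N : ℕ} (hdist : ∀ i, i < N → ∀ j, j < N → i ≠ j → v i ≠ v j)
  (hadj : ∀ i, i + 1 < N → H.Adj (v i) (v (i + 1)))
include hdist hadj

theorem exists_run {i ℓ : ℕ} (hN : i + ℓ < N) (hint : ∀ t ≤ ℓ, v (i + t) ∉ Set.range S.emb) :
    ∃ a b q, G.Adj a b ∧ 1 ≤ q ∧ q + ℓ ≤ d ∧ ∀ t ≤ ℓ, v (i + t) = S.pathVert a b (q + t) := by
  induction ℓ with
  | zero =>
    rcases mem_range_emb_or_exists_pathVert hS (v i) with hv | ⟨a, b, q, h, hq1, hq, hv⟩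
    · exact absurd hv (hint 0 le_rfl)
    · exact ⟨a, b, q, h, hq1, hq, fun t ht => by rwa [Nat.le_zero.1 ht]⟩
  | succ ℓ ih =>
    obtain ⟨a, b, q, h, hq1, hq, hrun⟩ := ih (by omega) fun t ht => hint t (by omega)
    have hnext := hadj (i + ℓ) (by omega)
    rw [hrun ℓ le_rfl] at hnext
    rcases adj_pathVert hS h (by omega) (by omega) hnext with e | e
    · obtain rfl | hℓ := Nat.eq_zero_or_pos ℓ
      · -- the stretch has only just started: read it along the reversed replacing path
        have hq2 : 2 ≤ q := by
          by_contra! hq2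
          rw [show q + 0 - 1 = 0 by omega, S.pathVert_zero h] at e
          exact hint 1 le_rfl ⟨a, e.symm⟩
        refine ⟨b, a, d + 1 - q, h.symm, by omega, by omega, fun t ht => ?_⟩
        rw [pathVert_swap hS h]
        obtain rfl | rfl : t = 0 ∨ t = 1 := by omega
        · rw [hrun 0 le_rfl]; congr 1; omega
        · rw [e]; congr 1; omega
      · refine absurd ?_ (hdist (i + ℓ - 1) (by omega) (i + ℓ + 1) (by omega) (by omega))
        rw [e, show i + ℓ - 1 = i + (ℓ - 1) by omega, hrun (ℓ - 1) (by omega)]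
        congr 1
        omega
    · have hlast : q + ℓ + 1 ≤ d := by
        by_contra! hlast
        rw [show q + ℓ + 1 = d + 1 by omega, pathVert_last hS h] at e
        exact hint (ℓ + 1) le_rfl ⟨b, e.symm⟩
      refine ⟨a, b, q, h, hq1, by omega, fun t ht => ?_⟩
      rcases Nat.lt_or_ge t (ℓ + 1) with ht' | ht'
      · exact hrun t (by omega)
      · rw [show t = ℓ + 1 by omega]
        exact e

theorem exists_run_from_emb {i ℓ : ℕ} {x : V} (hN : i + ℓ < N) (hℓ : 1 ≤ ℓ)
    (hx : v i = S.emb x) (hint : ∀ t, 1 ≤ t → t ≤ ℓ → v (i + t) ∉ Set.range S.emb) :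
    ∃ b, G.Adj x b ∧ ℓ ≤ d ∧ ∀ t ≤ ℓ, v (i + t) = S.pathVert x b t := by
  obtain ⟨a, b, q, h, hq1, hq, hrun⟩ := exists_run hS hdist hadj (i := i + 1) (ℓ := ℓ - 1)
    (by omega) fun t ht => by
      rw [add_assoc, add_comm 1 t]; exact hint (t + 1) (by omega) (by omega)
  have hfirst := hadj i (by omega)
  have hv1 := hrun 0 (Nat.zero_le _)
  rw [add_zero, add_zero] at hv1
  rw [hx, hv1] at hfirst
  have hrun' : ∀ t, 1 ≤ t → t ≤ ℓ → v (i + t) = S.pathVert a b (q + t - 1) := by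
    intro t ht1 ht
    rw [show i + t = i + 1 + (t - 1) by omega, hrun (t - 1) (by omega)]
    congr 1
    omega
  rcases adj_emb_pathVert hS h hq1 (by omega) hfirst with ⟨rfl, rfl⟩ | ⟨rfl, rfl⟩
  · refine ⟨b, h, by omega, fun t ht => ?_⟩
    obtain rfl | ht1 := Nat.eq_zero_or_pos t
    · rw [add_zero, hx, S.pathVert_zero h]
    · rw [hrun' t ht1 ht]
      congr 1
      omega
  · refine ⟨a, h.symm, by omega, fun t ht => ?_⟩
    obtain rfl | rfl : t = 0 ∨ t = 1 := by omega
    · rw [add_zero, hx, S.pathVert_zero h.symm]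
    · rw [hrun' 1 le_rfl ht, pathVert_swap hS h.symm]
      congr 1
      omega

theorem exists_run_to_emb {i ℓ : ℕ} {x : V} (hN : i + ℓ < N) (hℓ : 1 ≤ ℓ)
    (hx : v (i + ℓ) = S.emb x) (hint : ∀ t < ℓ, v (i + t) ∉ Set.range S.emb) :
    ∃ a, G.Adj a x ∧ ℓ ≤ d ∧ ∀ t ≤ ℓ, v (i + t) = S.pathVert a x (d + 1 - ℓ + t) := by
  obtain ⟨a, b, q, h, hq1, hq, hrun⟩ := exists_run hS hdist hadj (i := i) (ℓ := ℓ - 1)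
    (by omega) fun t ht => hint t (by omega)
  have hlast := hadj (i + (ℓ - 1)) (by omega)
  rw [show i + (ℓ - 1) + 1 = i + ℓ by omega, hx, hrun (ℓ - 1) le_rfl] at hlast
  rcases adj_emb_pathVert hS h (by omega) (by omega) hlast.symm with ⟨hq', rfl⟩ | ⟨hq', rfl⟩
  · obtain rfl : ℓ = 1 := by omega
    refine ⟨b, h.symm, le_trans hq1 (by omega), fun t ht => ?_⟩
    obtain rfl | rfl : t = 0 ∨ t = 1 := by omega
    · rw [hrun 0 le_rfl, pathVert_swap hS h]
      congr 1
      omega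
    · rw [hx, show d + 1 - 1 + 1 = d + 1 by omega, pathVert_last hS h.symm]
  · refine ⟨a, h, by omega, fun t ht => ?_⟩
    rcases Nat.lt_or_ge t ℓ with ht' | ht'
    · rw [hrun t (by omega)]
      congr 1
      omega
    · rw [show t = ℓ by omega, hx, show d + 1 - ℓ + ℓ = d + 1 by omega, pathVert_last hS h]

theorem exists_traversal (hd : 1 ≤ d) {i j : ℕ} {x y : V} (hij : i < j) (hjN : j < N)
    (hx : v i = S.emb x) (hy : v j = S.emb y)
    (hint : ∀ t, i < t → t < j → v t ∉ Set.range S.emb) :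
    G.Adj x y ∧ j = i + d + 1 ∧ ∀ t ≤ d + 1, v (i + t) = S.pathVert x y t := by
  have hij2 : i + 2 ≤ j := by
    by_contra! hij2
    have := hadj i (by omega)
    rw [hx, show i + 1 = j by omega, hy] at this
    exact not_adj_emb_emb hS hd x y this
  obtain ⟨b, h, hℓ, hrun⟩ := exists_run_from_emb hS hdist hadj (i := i) (ℓ := j - i - 1)
    (by omega) (by omega) hx fun t ht1 ht => hint (i + t) (by omega) (by omega)
  have hlast := hadj (i + (j - i - 1)) (by omega)
  rw [show i + (j - i - 1) + 1 = j by omega, hy, hrun _ le_rfl] at hlast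
  rcases adj_emb_pathVert hS h (by omega) hℓ hlast.symm with ⟨-, rfl⟩ | ⟨hjd, rfl⟩
  · exact absurd (hx.trans hy.symm) (hdist i (by omega) j hjN (by omega))
  · refine ⟨h, by omega, fun t ht => ?_⟩
    rcases Nat.lt_or_ge t (d + 1) with ht' | ht'
    · exact hrun t (by omega)
    · rw [show i + t = j by omega, hy, show t = d + 1 by omega, pathVert_last hS h]

end SubdivisionWitness

section Code

variable {V : Type*} {A B d : ℕ} [NeZero B] (code : V ↪ Fin A × (Fin d → Fin B))

/-- Digits are indexed from `1`; the value is `0` outside `[1, d]`. -/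
def digit (x : V) (k : ℕ) : Fin B :=
  if h : 1 ≤ k ∧ k ≤ d then (code x).2 ⟨k - 1, by omega⟩ else 0

theorem eq_of_digit_eq {x y : V} (h1 : (code x).1 = (code y).1)
    (h2 : ∀ k, 1 ≤ k → k ≤ d → digit code x k = digit code y k) : x = y := by
  refine code.injective (Prod.ext h1 (funext fun k => ?_))
  have := h2 (k + 1) (by omega) (by omega)
  simpa [digit, k.isLt] using this

/-- `0` when all digits of `x` and `y` agree. -/
def topDiff (x y : V) : ℕ :=
  Nat.findGreatest (fun k => digit code x k ≠ digit code y k) d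

theorem topDiff_le (x y : V) : topDiff code x y ≤ d := Nat.findGreatest_le d

theorem digit_topDiff_ne {x y : V} (h : 1 ≤ topDiff code x y) :
    digit code x (topDiff code x y) ≠ digit code y (topDiff code x y) :=
  Nat.findGreatest_of_ne_zero rfl (Nat.one_le_iff_ne_zero.1 h)

theorem one_le_topDiff {x y : V} (hxy : x ≠ y) (h1 : (code x).1 = (code y).1) :
    1 ≤ topDiff code x y := by
  by_contra! h0
  refine hxy (eq_of_digit_eq code h1 fun k hk1 hk => ?_)
  by_contra hne
  have : 0 < topDiff code x y := Nat.findGreatest_pos.2 ⟨k, hk1, hk, hne⟩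
  omega

/-- The second component of the colour of a division vertex: `inl m` at position `1`, where `m`
records whether `1` is the top differing position; `inr none` at the top differing position;
and a letter of the square-free word everywhere else. -/
abbrev Phase := Bool ⊕ Option (Bool × Bool)

def phase (x y : V) (k : ℕ) : Phase :=
  if k = 1 then .inl (decide (k = topDiff code x y))
  else if k = topDiff code x y then .inr none
  else .inr (some (squareFreeWord k))

theorem phase_eq_phase {x y x' y' : V} {k k' : ℕ}
    (h : phase code x y k = phase code x' y' k') :
    (k = 1 ↔ k' = 1) ∧ (k = topDiff code x y ↔ k' = topDiff code x' y') := by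
  unfold phase at h
  split_ifs at h <;> simp_all

theorem phase_of_ne {x y : V} {k : ℕ} (h1 : k ≠ 1) (h2 : k ≠ topDiff code x y) :
    phase code x y k = .inr (some (squareFreeWord k)) := by
  simp [phase, h1, h2]

theorem phase_square_free (x y : V) {p s : ℕ} (hp : 1 ≤ p) (hs : 0 < s) :
    ¬ ∀ t < s, phase code x y (p + t) = phase code x y (p + s + t) := by
  intro h
  set m := topDiff code x y
  -- the letters at positions `1` and `m` occur only once, so they cannot lie in a square
  have hplain : ∀ t < s, p + t ≠ 1 ∧ p + t ≠ m ∧ p + s + t ≠ m := by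
    intro t ht
    have := phase_eq_phase code (h t ht)
    omega
  refine squareFreeWord_square_free hs p fun t ht => ?_
  obtain ⟨h1, h2, h3⟩ := hplain t ht
  have := h t ht
  rwa [phase_of_ne code h1 h2, phase_of_ne code (by omega) h3, Sum.inr.injEq,
    Option.some_inj] at this

variable [LinearOrder V]

def edgeColour (a b : V) (k : ℕ) : Fin B × Phase :=
  if a < b then (digit code b k, phase code a b k)
  else (digit code a (d + 1 - k), phase code b a (d + 1 - k))

theorem edgeColour_of_lt {a b : V} (hab : a < b) (k : ℕ) :
    edgeColour code a b k = (digit code b k, phase code a b k) :=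
  if_pos hab

theorem edgeColour_swap {a b : V} (hab : a ≠ b) {k : ℕ} (hk : k ≤ d + 1) :
    edgeColour code b a k = edgeColour code a b (d + 1 - k) := by
  rcases hab.lt_or_gt with hab | hab
  · rw [edgeColour, if_neg (not_lt.2 hab.le), edgeColour_of_lt code hab]
  · rw [edgeColour_of_lt code hab, edgeColour, if_neg (not_lt.2 hab.le),
      show d + 1 - (d + 1 - k) = k by omega]

theorem isLeft_phase_edgeColour {a b : V} (hab : a ≠ b) {k : ℕ} (hk : k ≤ d) :
    (edgeColour code a b k).2.isLeft ↔ (a < b ∧ k = 1 ∨ b < a ∧ k = d) := by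
  have hleft : ∀ x y k, (phase code x y k).isLeft ↔ k = 1 := by
    intro x y k
    unfold phase
    split_ifs <;> simp_all
  rcases hab.lt_or_gt with hab | hab
  · rw [edgeColour_of_lt code hab, hleft]
    simp [hab, not_lt.2 hab.le]
  · rw [edgeColour, if_neg (not_lt.2 hab.le), hleft]
    simp only [hab, not_lt.2 hab.le, false_and, true_and, false_or]
    omega

theorem lt_iff_lt_of_edgeColour_eq (hd : 2 ≤ d) {a b a' b' : V} (hab : a ≠ b) (hab' : a' ≠ b')
    {k : ℕ} (hk : k = 1 ∨ k = d) (h : edgeColour code a b k = edgeColour code a' b' k) :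
    a < b ↔ a' < b' := by
  have := isLeft_phase_edgeColour code hab (k := k) (by omega)
  rw [h, isLeft_phase_edgeColour code hab' (by omega)] at this
  rcases hab.lt_or_gt with h1 | h1 <;> rcases hab'.lt_or_gt with h2 | h2 <;>
    simp only [h1, h2, not_lt.2 h1.le, not_lt.2 h2.le, true_and, false_and, or_false,
      false_or, true_iff, iff_true] at this ⊢ <;> omega

theorem edgeColour_square_free {a b : V} (hab : a ≠ b) {q s : ℕ} (hq : 1 ≤ q) (hs : 0 < s)
    (hqs : q + 2 * s ≤ d + 1) :
    ¬ ∀ t < s, edgeColour code a b (q + t) = edgeColour code a b (q + s + t) := by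
  intro h
  rcases hab.lt_or_gt with hab | hab
  · refine phase_square_free code a b hq hs fun t ht => ?_
    have := h t ht
    rw [edgeColour_of_lt code hab, edgeColour_of_lt code hab] at this
    exact (Prod.ext_iff.1 this).2
  · -- read backwards, the square is a square of the phases of `ba`
    refine phase_square_free code b a (p := d + 2 - q - 2 * s) (by omega) hs fun t ht => ?_
    have := h (s - 1 - t) (by omega)
    rw [edgeColour_swap code hab.ne (by omega), edgeColour_swap code hab.ne (by omega),
      edgeColour_of_lt code hab, edgeColour_of_lt code hab,
      show d + 1 - (q + (s - 1 - t)) = d + 2 - q - 2 * s + s + t by omega,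
      show d + 1 - (q + s + (s - 1 - t)) = d + 2 - q - 2 * s + t by omega] at this
    exact (Prod.ext_iff.1 this).2.symm

theorem eq_or_eq_of_edgeColour_eq (hd : 2 ≤ d) {a b a' b' : V} (hab : a ≠ b) (hab' : a' ≠ b')
    (ha : (code a).1 = (code a').1) (hb : (code b).1 = (code b').1)
    (h : ∀ k, 1 ≤ k → k ≤ d → edgeColour code a b k = edgeColour code a' b' k) :
    a = a' ∨ b = b' := by
  have hdir := lt_iff_lt_of_edgeColour_eq code hd hab hab' (.inl rfl) (h 1 le_rfl (by omega))
  rcases hab.lt_or_gt with hlt | hlt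
  · refine .inr (eq_of_digit_eq code hb fun k hk1 hk => ?_)
    have := h k hk1 hk
    rw [edgeColour_of_lt code hlt, edgeColour_of_lt code (hdir.1 hlt)] at this
    exact (Prod.ext_iff.1 this).1
  · have hlt' : b' < a' := hab'.symm.lt_or_gt.resolve_right fun h' => (not_lt.2 hlt.le) (hdir.2 h')
    refine .inl (eq_of_digit_eq code ha fun k hk1 hk => ?_)
    have := h (d + 1 - k) (by omega) (by omega)
    rw [← edgeColour_swap code hab (k := k) (by omega),
      ← edgeColour_swap code hab' (k := k) (by omega),
      edgeColour_of_lt code hlt, edgeColour_of_lt code hlt'] at this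
    exact (Prod.ext_iff.1 this).1

theorem false_of_edgeColour_eq_before (hd : 2 ≤ d) {a x x' : V} (hax : a ≠ x) (hxx' : x < x')
    (hp : 1 ≤ topDiff code x x')
    (h : ∀ k, (k = d ∨ k = topDiff code x x') → edgeColour code a x k = edgeColour code x x' k) :
    False := by
  have hax' := (lt_iff_lt_of_edgeColour_eq code hd hax hxx'.ne (.inr rfl) (h d (.inl rfl))).2 hxx'
  have := h _ (.inr rfl)
  rw [edgeColour_of_lt code hax', edgeColour_of_lt code hxx'] at this
  exact digit_topDiff_ne code hp (Prod.ext_iff.1 this).1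

theorem false_of_edgeColour_eq_after (hd : 2 ≤ d) {x x' b : V} (hx'b : x' ≠ b) (hxx' : x < x')
    (hp : 1 ≤ topDiff code x x')
    (h : ∀ k, (k = 1 ∨ k = topDiff code x x') → edgeColour code x x' k = edgeColour code x' b k) :
    False := by
  have hx'b' := (lt_iff_lt_of_edgeColour_eq code hd hxx'.ne hx'b (.inl rfl) (h 1 (.inl rfl))).1 hxx'
  have := h _ (.inr rfl)
  rw [edgeColour_of_lt code hxx', edgeColour_of_lt code hx'b'] at this
  -- equal phases put the top differing position of `x' b` at that of `x x'`
  have hp' := (phase_eq_phase code (Prod.ext_iff.1 this).2).2.1 rfl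
  have := digit_topDiff_ne code (x := x') (y := b) (by omega)
  rw [← hp'] at this
  exact this (Prod.ext_iff.1 ‹_›).1

/-- The colour pattern of a repetitive path with exactly one branch vertex per half, `x` and then
`x'`: the `m` vertices before `x` lie on an edge `a x`, the `d - m` after `x'` on an edge `x' b`. -/
theorem false_of_edgeColour_windows (hd : 2 ≤ d) {x x' : V} (hxx' : x ≠ x')
    (hcode : (code x).1 = (code x').1) {m : ℕ} (hm : m ≤ d)
    (hbefore : 1 ≤ m → ∃ a, a ≠ x ∧
      ∀ k, d + 1 - m ≤ k → k ≤ d → edgeColour code a x k = edgeColour code x x' k)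
    (hafter : m < d → ∃ b, b ≠ x' ∧
      ∀ k, 1 ≤ k → k ≤ d - m → edgeColour code x x' k = edgeColour code x' b k) :
    False := by
  wlog hlt : x < x' generalizing x x' m
  · refine this hxx'.symm hcode.symm (m := d - m) (by omega) (fun hm' => ?_) (fun hm' => ?_)
      (lt_of_le_of_ne (not_lt.1 hlt) hxx'.symm)
    · obtain ⟨b, hb, hcol⟩ := hafter (by omega)
      refine ⟨b, hb, fun k hk1 hk => ?_⟩
      rw [edgeColour_swap code hb.symm (by omega), ← hcol _ (by omega) (by omega),
        edgeColour_swap code hxx' (by omega)]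
    · obtain ⟨a, ha, hcol⟩ := hbefore (by omega)
      refine ⟨a, ha, fun k hk1 hk => ?_⟩
      rw [edgeColour_swap code hxx' (by omega), ← hcol _ (by omega) (by omega),
        edgeColour_swap code ha.symm (by omega), show d + 1 - (d + 1 - k) = k by omega]
  have hp := one_le_topDiff code hxx' hcode
  have hpd := topDiff_le code x x'
  by_cases hpm : topDiff code x x' ≤ d - m
  · obtain ⟨b, hb, hcol⟩ := hafter (by omega)
    exact false_of_edgeColour_eq_after code hd hb.symm hlt hp fun k hk =>
      hcol k (by omega) (by omega)
  · obtain ⟨a, ha, hcol⟩ := hbefore (by omega)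
    exact false_of_edgeColour_eq_before code hd ha hlt hp fun k hk => hcol k (by omega) (by omega)

end Code

namespace SubdivisionWitness

variable {V W : Type*} [LinearOrder V] {G : SimpleGraph V} {H : SimpleGraph W} {A B d : ℕ}
  [NeZero B] (code : V ↪ Fin A × (Fin d → Fin B)) (S : SubdivisionWitness G H)

open scoped Classical in
noncomputable def colouring (w : W) : Fin A ⊕ Fin B × Phase :=
  if h : w ∈ Set.range S.emb then .inl (code h.choose).1
  else if h' : ∃ p : V × V × ℕ, G.Adj p.1 p.2.1 ∧ 1 ≤ p.2.2 ∧ p.2.2 ≤ d ∧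
      w = S.pathVert p.1 p.2.1 p.2.2 then
    .inr (edgeColour code h'.choose.1 h'.choose.2.1 h'.choose.2.2)
  else .inr (0, .inr none)

theorem colouring_emb (x : V) : S.colouring code (S.emb x) = .inl (code x).1 := by
  have h : S.emb x ∈ Set.range S.emb := ⟨x, rfl⟩
  rw [colouring, dif_pos h, S.emb.injective h.choose_spec]

variable {S}

theorem code_eq_of_repetitive {s : ℕ} {v : ℕ → W}
    (hrep : ∀ i, i < s → S.colouring code (v i) = S.colouring code (v (i + s)))
    {t : ℕ} (ht : t < s) {x x' : V} (hx : v t = S.emb x)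
    (hx' : v (t + s) = S.emb x') : (code x).1 = (code x').1 := by
  have := hrep t ht
  rwa [hx, hx', colouring_emb, colouring_emb, Sum.inl.injEq] at this

variable (hS : ∀ ⦃a b : V⦄ (h : G.Adj a b), (S.path h).length = d + 1)
include hS

theorem colouring_pathVert {a b : V} (h : G.Adj a b) {k : ℕ} (hk1 : 1 ≤ k) (hk : k ≤ d) :
    S.colouring code (S.pathVert a b k) = .inr (edgeColour code a b k) := by
  have hne : S.pathVert a b k ∉ Set.range S.emb := fun ⟨x, hx⟩ =>
    pathVert_ne_emb hS h hk1 hk x hx.symm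
  have hex : ∃ p : V × V × ℕ, G.Adj p.1 p.2.1 ∧ 1 ≤ p.2.2 ∧ p.2.2 ≤ d ∧
      S.pathVert a b k = S.pathVert p.1 p.2.1 p.2.2 := ⟨(a, b, k), h, hk1, hk, rfl⟩
  rw [colouring, dif_neg hne, dif_pos hex]
  obtain ⟨h', hk1', hk', e⟩ := hex.choose_spec
  rcases pathVert_eq_pathVert hS h h' hk1 hk hk1' hk' e with ⟨e1, e2, e3⟩ | ⟨e1, e2, e3⟩
  · rw [← e1, ← e2, ← e3]
  · rw [← e1, ← e2, show hex.choose.2.2 = d + 1 - k by omega,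
      edgeColour_swap code h.ne (by omega), show d + 1 - (d + 1 - k) = k by omega]

theorem isLeft_colouring (w : W) : (S.colouring code w).isLeft ↔ w ∈ Set.range S.emb := by
  rcases mem_range_emb_or_exists_pathVert hS w with ⟨x, rfl⟩ | ⟨a, b, k, h, hk1, hk, rfl⟩
  · simp [colouring_emb]
  · simp only [colouring_pathVert code hS h hk1 hk, Sum.isLeft_inr, Bool.false_eq_true,
      false_iff]
    exact fun ⟨x, hx⟩ => pathVert_ne_emb hS h hk1 hk x hx.symm

variable {s : ℕ} {v : ℕ → W}
  (hrep : ∀ i, i < s → S.colouring code (v i) = S.colouring code (v (i + s)))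
include hrep

theorem mem_range_emb_iff_of_repetitive {t : ℕ} (ht : t < s) :
    v t ∈ Set.range S.emb ↔ v (t + s) ∈ Set.range S.emb := by
  rw [← isLeft_colouring code hS, ← isLeft_colouring code hS, hrep t ht]

theorem edgeColour_eq_of_repetitive {t : ℕ} (ht : t < s) {a b a' b' : V} {k k' : ℕ}
    (h : G.Adj a b) (h' : G.Adj a' b') (hk1 : 1 ≤ k) (hk : k ≤ d) (hk1' : 1 ≤ k') (hk' : k' ≤ d)
    (e : v t = S.pathVert a b k) (e' : v (t + s) = S.pathVert a' b' k') :
    edgeColour code a b k = edgeColour code a' b' k' := by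
  have := hrep t ht
  rwa [e, e', colouring_pathVert code hS h hk1 hk, colouring_pathVert code hS h' hk1' hk',
    Sum.inr.injEq] at this

variable (hdist : ∀ i, i < 2 * s → ∀ j, j < 2 * s → i ≠ j → v i ≠ v j)
  (hadj : ∀ i, i + 1 < 2 * s → H.Adj (v i) (v (i + 1)))
include hdist hadj

theorem false_of_repetitive_of_forall_not_mem (hs : 0 < s)
    (hint : ∀ t < 2 * s, v t ∉ Set.range S.emb) : False := by
  obtain ⟨a, b, q, h, hq1, hq, hrun⟩ := exists_run hS hdist hadj (i := 0) (ℓ := 2 * s - 1)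
    (by omega) fun t ht => hint (0 + t) (by omega)
  simp only [zero_add] at hrun
  refine edgeColour_square_free code h.ne hq1 hs (by omega) fun t ht =>
    edgeColour_eq_of_repetitive code hS hrep ht h h (by omega) (by omega) (by omega) (by omega)
      (hrun t (by omega)) ?_
  rw [hrun (t + s) (by omega)]
  congr 1
  omega

theorem false_of_repetitive_of_consecutive_mem (hd : 2 ≤ d) {i j : ℕ} (hij : i < j)
    (hjs : j < s) (hi : v i ∈ Set.range S.emb) (hj : v j ∈ Set.range S.emb)
    (hint : ∀ t, i < t → t < j → v t ∉ Set.range S.emb) : False := by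
  obtain ⟨x, hx⟩ := hi
  obtain ⟨y, hy⟩ := hj
  obtain ⟨x', hx'⟩ := (mem_range_emb_iff_of_repetitive code hS hrep (by omega)).1 ⟨x, hx⟩
  obtain ⟨y', hy'⟩ := (mem_range_emb_iff_of_repetitive code hS hrep hjs).1 ⟨y, hy⟩
  obtain ⟨hxy, hji, hrun⟩ := exists_traversal hS hdist hadj (by omega) hij (by omega) hx.symm
    hy.symm hint
  obtain ⟨hxy', -, hrun'⟩ := exists_traversal hS hdist hadj (by omega) (i := i + s) (j := j + s)
    (by omega) (by omega) hx'.symm hy'.symm fun t h1 h2 hv => hint (t - s) (by omega) (by omega)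
      ((mem_range_emb_iff_of_repetitive code hS hrep (by omega)).2
        (by rwa [Nat.sub_add_cancel (by omega)]))
  rcases eq_or_eq_of_edgeColour_eq code hd hxy.ne hxy'.ne
    (code_eq_of_repetitive code hrep (by omega) hx.symm hx'.symm)
    (code_eq_of_repetitive code hrep hjs hy.symm hy'.symm) (fun k hk1 hk =>
      edgeColour_eq_of_repetitive code hS hrep (t := i + k) (by omega) hxy hxy' hk1 hk hk1 hk
        (hrun k (by omega)) (by rw [add_right_comm]; exact hrun' k (by omega))) with rfl | rfl
  · exact hdist i (by omega) (i + s) (by omega) (by omega) (hx.symm.trans hx')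
  · exact hdist j (by omega) (j + s) (by omega) (by omega) (hy.symm.trans hy')

theorem false_of_repetitive_of_unique_mem (hd : 2 ≤ d) {i : ℕ} (his : i < s)
    (hi : v i ∈ Set.range S.emb)
    (hint : ∀ t < 2 * s, t ≠ i → t ≠ i + s → v t ∉ Set.range S.emb) : False := by
  obtain ⟨x, hx⟩ := hi
  obtain ⟨x', hx'⟩ := (mem_range_emb_iff_of_repetitive code hS hrep his).1 ⟨x, hx⟩
  obtain ⟨hxx', hsd, hmid⟩ := exists_traversal hS hdist hadj (by omega) (i := i) (j := i + s)
    (by omega) (by omega) hx.symm hx'.symm fun t h1 h2 => hint t (by omega) (by omega) (by omega)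
  refine false_of_edgeColour_windows code hd hxx'.ne
    (code_eq_of_repetitive code hrep his hx.symm hx'.symm) (m := i) (by omega)
    (fun hi1 => ?_) (fun hid => ?_)
  · obtain ⟨a, ha, -, hrun⟩ := exists_run_to_emb hS hdist hadj (i := 0) (ℓ := i) (by omega) hi1
      (by rw [zero_add]; exact hx.symm) fun t ht => hint (0 + t) (by omega) (by omega) (by omega)
    refine ⟨a, ha.ne, fun k hk1 hk => edgeColour_eq_of_repetitive code hS hrep
      (t := k - (d + 1 - i)) (by omega) ha hxx' (by omega) hk (by omega) hk ?_ ?_⟩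
    · rw [← zero_add (k - _), hrun _ (by omega)]
      congr 1
      omega
    · rw [← hmid k (by omega)]
      congr 1
      omega
  · obtain ⟨b, hb, -, hrun⟩ := exists_run_from_emb hS hdist hadj (i := i + s) (ℓ := d - i)
      (by omega) (by omega) hx'.symm fun t h1 h2 => hint _ (by omega) (by omega) (by omega)
    exact ⟨b, hb.ne', fun k hk1 hk => edgeColour_eq_of_repetitive code hS hrep (t := i + k)
      (by omega) hxx' hb hk1 (by omega) hk1 (by omega) (hmid k (by omega))
      (by rw [add_right_comm]; exact hrun k hk)⟩

omit hrep hdist hadj in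
theorem nonRepColoring_colouring (hd : 2 ≤ d) : NonRepColoring H (S.colouring code) := by
  intro s hs v hdist hadj hrep
  have hper := fun t (ht : t < s) => mem_range_emb_iff_of_repetitive code hS hrep ht
  by_cases hex : ∃ i < s, v i ∈ Set.range S.emb
  · classical
    obtain ⟨his, hi⟩ := Nat.find_spec hex
    have hex' : ∃ j, Nat.find hex < j ∧ v j ∈ Set.range S.emb :=
      ⟨Nat.find hex + s, by omega, (hper _ his).1 hi⟩
    obtain ⟨hij, hj⟩ := Nat.find_spec hex'
    set i := Nat.find hex
    set j := Nat.find hex'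
    have hbefore : ∀ t < i, v t ∉ Set.range S.emb := fun t ht hv =>
      Nat.find_min hex ht ⟨by omega, hv⟩
    have hbetween : ∀ t, i < t → t < j → v t ∉ Set.range S.emb := fun t h1 h2 hv =>
      Nat.find_min hex' h2 ⟨h1, hv⟩
    by_cases hjs : j < s
    · exact false_of_repetitive_of_consecutive_mem code hS hrep hdist hadj hd hij hjs hi hj
        hbetween
    -- otherwise `i` and `i + s` are the only branch positions, by periodicity
    refine false_of_repetitive_of_unique_mem code hS hrep hdist hadj hd his hi
      fun t ht hti htis hv => ?_
    rcases lt_or_gt_of_ne hti with hti | hti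
    · exact hbefore t hti hv
    by_cases htj : t < j
    · exact hbetween t hti htj hv
    have hv' := (hper (t - s) (by omega)).2 (by rwa [Nat.sub_add_cancel (by omega)])
    rcases lt_or_gt_of_ne htis with htis | htis
    · exact hbefore (t - s) (by omega) hv'
    · exact hbetween (t - s) (by omega) (by omega) hv'
  · refine false_of_repetitive_of_forall_not_mem code hS hrep hdist hadj hs fun t ht hv => hex ?_
    rcases Nat.lt_or_ge t s with hts | hts
    · exact ⟨t, hts, hv⟩
    · exact ⟨t - s, by omega, (hper _ (by omega)).2 (by rwa [Nat.sub_add_cancel hts])⟩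

end SubdivisionWitness

theorem stmt_19_general {W : Type*} (A B d n : ℕ)
    (hB : 2 ≤ B) (hd : 2 ≤ d) (hle : n ≤ A * B ^ d)
    (H : SimpleGraph W) (hsub : IsExactSubdivision d (completeGraph (Fin n)) H) :
    piNum H ≤ A + 8 * B := by
  obtain ⟨S, hS⟩ := hsub
  have : NeZero B := ⟨by omega⟩
  obtain ⟨code⟩ : Nonempty (Fin n ↪ Fin A × (Fin d → Fin B)) :=
    Function.Embedding.nonempty_of_card_le (by simpa using hle)
  calc piNum H ≤ Fintype.card (Fin A ⊕ Fin B × Phase) :=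
        piNum_le_card (SubdivisionWitness.nonRepColoring_colouring code hS hd)
    _ ≤ A + 8 * B := by
      simp only [Fintype.card_sum, Fintype.card_prod, Fintype.card_fin, Fintype.card_bool,
        Fintype.card_option]
      omega

/-- For all integers `A ≥ 1`, `B ≥ 2`, `d ≥ 2` and every `n ≥ 1` with
`n ≤ A·B^d`, the `d`-subdivision `K_{n,d}` of `K_n` satisfies `π(K_{n,d}) ≤ A + 8B`. -/
theorem stmt_19 {W : Type*} [Fintype W] (A B d n : ℕ)
    (hA : 1 ≤ A) (hB : 2 ≤ B) (hd : 2 ≤ d) (hn : 1 ≤ n) (hle : n ≤ A * B ^ d)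
    (H : SimpleGraph W) (hsub : IsExactSubdivision d (completeGraph (Fin n)) H) :
    piNum H ≤ A + 8 * B :=
  stmt_19_general A B d n hB hd hle H hsub
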